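/- Let R be a ring. The supremum of projective dimensions of all R-modules equals the supremum of injective dimensions of all R-modules (as elements of ℕ ∪ {∞}). -/

import Mathlib

universe u

open CategoryTheory

variable (R : Type u) [Ring R]

/-- Resolutions `0 → P_n → ⋯ → P_0 → M → 0` of length `≤ n` by modules satisfying `pred`. -/
def ResBy (pred : ∀ (M : Type u) [AddCommGroup M] [Module R M], Prop) :
    ℕ → ∀ (M : Type u) [AddCommGroup M] [Module R M], Prop
  | 0, M, _, _ => pred M
  | (n+1), M, _, _ => ∃ (P : Type u) (_ : AddCommGroup P) (_ : Module R P)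
      (f : P →ₗ[R] M), pred P ∧ Function.Surjective f ∧
        ResBy pred n (LinearMap.ker f)

/-- `M` admits an exact sequence `0 → P_n → ⋯ → P_0 → M → 0`
with all `P_i` finitely generated projective, i.e. `M ∈ 𝒫^{<n+1}`. -/
def FPRes (n : ℕ) (M : Type u) [AddCommGroup M] [Module R M] : Prop :=
  ResBy R (fun P _ _ => Module.Finite R P ∧ Module.Projective R P) n M

/-- `M` has projective dimension at most `n`. -/
def pdLE (n : ℕ) (M : Type u) [AddCommGroup M] [Module R M] : Prop :=
  ResBy R (fun P _ _ => Module.Projective R P) n M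

/-- Coresolutions `0 → M → I^0 → ⋯ → I^n → 0` of length `≤ n` by modules satisfying `pred`. -/
def CoresBy (pred : ∀ (M : Type u) [AddCommGroup M] [Module R M], Prop) :
    ℕ → ∀ (M : Type u) [AddCommGroup M] [Module R M], Prop
  | 0, M, _, _ => pred M
  | (n+1), M, _, _ => ∃ (I : Type u) (_ : AddCommGroup I) (_ : Module R I)
      (f : M →ₗ[R] I), pred I ∧ Function.Injective f ∧
        CoresBy pred n (I ⧸ LinearMap.range f)

/-- `M` has injective dimension at most `n`. -/
def idLE (n : ℕ) (M : Type u) [AddCommGroup M] [Module R M] : Prop :=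
  CoresBy R (fun I _ _ => Module.Injective R I) n M

/-- The projective dimension of `M`, as an element of `ℕ∞`. -/
noncomputable def pdim (M : Type u) [AddCommGroup M] [Module R M] : ℕ∞ :=
  sInf ((↑) '' {n : ℕ | pdLE R n M})

/-- The injective dimension of `M`, as an element of `ℕ∞`. -/
noncomputable def idim (M : Type u) [AddCommGroup M] [Module R M] : ℕ∞ :=
  sInf ((↑) '' {n : ℕ | idLE R n M})

/-- A short exact sequence `0 → A → B → C → 0` (given by `f`, `g`) is `n`-exact if
`Hom_R(M, -)` keeps it exact for every `M ∈ 𝒫^{<n+1}`. -/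
def NExactSES (n : ℕ) {A B C : Type u} [AddCommGroup A] [Module R A]
    [AddCommGroup B] [Module R B] [AddCommGroup C] [Module R C]
    (f : A →ₗ[R] B) (g : B →ₗ[R] C) : Prop :=
  ∀ (M : Type u) [AddCommGroup M] [Module R M], FPRes R n M →
    Function.Injective (fun h : M →ₗ[R] A => f.comp h) ∧
    Function.Exact (fun h : M →ₗ[R] A => f.comp h) (fun h : M →ₗ[R] B => g.comp h) ∧
    Function.Surjective (fun h : M →ₗ[R] B => g.comp h)

/-- `Q` is `n`-projective if `Hom_R(Q, -)` keeps every `n`-exact short exact sequence exact. -/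
def NProj (n : ℕ) (Q : Type u) [AddCommGroup Q] [Module R Q] : Prop :=
  ∀ (A B C : Type u) [AddCommGroup A] [Module R A] [AddCommGroup B] [Module R B]
    [AddCommGroup C] [Module R C] (f : A →ₗ[R] B) (g : B →ₗ[R] C),
    Function.Injective f → Function.Surjective g → Function.Exact f g →
    NExactSES R n f g →
    Function.Injective (fun h : Q →ₗ[R] A => f.comp h) ∧
    Function.Exact (fun h : Q →ₗ[R] A => f.comp h) (fun h : Q →ₗ[R] B => g.comp h) ∧
    Function.Surjective (fun h : Q →ₗ[R] B => g.comp h)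

/-- `Ext^k_R(M, N)` as an abelian group (computed in `ModuleCat R`). -/
noncomputable def ExtGrp (k : ℕ) (M N : Type u) [AddCommGroup M] [Module R M]
    [AddCommGroup N] [Module R N] : Type u :=
  ((Ext ℤ (ModuleCat.{u} R) k).obj (Opposite.op (ModuleCat.of R M))).obj (ModuleCat.of R N)

/-!
"Every module has projective dimension `≤ n`" and "every module has injective dimension `≤ n`"
both amount to the vanishing of `Ext^{n+1}(M, N)` for all modules `M`, `N` (vanishing in one
degree propagates to all higher ones by dimension shifting). The concrete (co)resolutions defining
`pdLE` and `idLE` are matched with these Ext conditions one step at a time, along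
`0 → ker f → P → M → 0` with `P` projective and `0 → N → I → I ⧸ N → 0` with `I` injective.
-/

theorem ENat.sInf_image_coe_le_coe_iff {p : ℕ → Prop} (hp : Monotone p) (n : ℕ) :
    sInf ((↑) '' {k | p k} : Set ℕ∞) ≤ n ↔ p n := by
  refine ⟨fun h => ?_, fun h => sInf_le ⟨n, h, rfl⟩⟩
  rcases Set.eq_empty_or_nonempty {k | p k} with hempty | hne
  · simp [hempty] at h
  · obtain ⟨k, hk, hkeq⟩ := csInf_mem (hne.image ((↑) : ℕ → ℕ∞))
    rw [← hkeq] at h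
    exact hp (by exact_mod_cast h) hk

theorem CategoryTheory.forall_hasProjectiveDimensionLT_iff_forall_hasInjectiveDimensionLT
    {C : Type*} [Category C] [Abelian C] [EnoughProjectives C] [EnoughInjectives C] (n : ℕ) :
    (∀ X : C, HasProjectiveDimensionLT X n) ↔ ∀ X : C, HasInjectiveDimensionLT X n := by
  let := HasExt.standard C
  constructor
  · exact fun h Y => hasInjectiveDimensionLT_of_enoughProjectives Y n fun X =>
      (h X).subsingleton X n n le_rfl Y
  · exact fun h X => hasProjectiveDimensionLT_of_enoughInjectives X n fun Y =>
      (h Y).subsingleton Y n n le_rfl X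

section ModuleDimension

variable {R}

section DimensionShifting

variable {M N P I : Type u} [AddCommGroup M] [Module R M] [AddCommGroup N] [Module R N]
  [AddCommGroup P] [Module R P] [AddCommGroup I] [Module R I]

theorem hasProjectiveDimensionLE_succ_iff_of_surjective [Module.Projective R P]
    {f : P →ₗ[R] M} (hf : Function.Surjective f) (n : ℕ) :
    HasProjectiveDimensionLE (ModuleCat.of R M) (n + 1) ↔
      HasProjectiveDimensionLE (ModuleCat.of R (LinearMap.ker f)) n :=
  (LinearMap.shortExact_shortComplexKer hf).hasProjectiveDimensionLT_X₃_iff n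
    ((IsProjective.iff_projective P).mp ‹_›)

theorem hasInjectiveDimensionLE_succ_iff_of_injective [Module.Injective R I]
    {f : N →ₗ[R] I} (hf : Function.Injective f) (n : ℕ) :
    HasInjectiveDimensionLE (ModuleCat.of R N) (n + 1) ↔
      HasInjectiveDimensionLE (ModuleCat.of R (I ⧸ LinearMap.range f)) n := by
  have hexact := LinearMap.exact_map_mkQ_range f
  have hS := ModuleCat.shortComplex_shortExact
    (ModuleCat.shortComplexOfCompEqZero f (LinearMap.range f).mkQ hexact.linearMap_comp_eq_zero)
    hexact hf (Submodule.mkQ_surjective _)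
  exact (hS.hasInjectiveDimensionLT_X₃_iff n
    ((Module.injective_iff_injective_object R I).mp ‹_›)).symm

end DimensionShifting

theorem pdLE_iff_hasProjectiveDimensionLE (n : ℕ) (M : Type u) [AddCommGroup M] [Module R M] :
    pdLE R n M ↔ HasProjectiveDimensionLE (ModuleCat.of R M) n := by
  induction n generalizing M with
  | zero =>
    rw [HasProjectiveDimensionLE, zero_add, ← projective_iff_hasProjectiveDimensionLT_one,
      ← IsProjective.iff_projective]
    rfl
  | succ n ih =>
    constructor
    · rintro ⟨P, _, _, f, hP, hf, hker⟩
      exact (hasProjectiveDimensionLE_succ_iff_of_surjective hf n).mpr ((ih _).mp hker)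
    · intro h
      have hf := Finsupp.linearCombination_surjective R (Function.surjective_id (α := M))
      exact ⟨M →₀ R, _, _, _, inferInstance, hf,
        (ih _).mpr ((hasProjectiveDimensionLE_succ_iff_of_surjective hf n).mp h)⟩

theorem idLE_iff_hasInjectiveDimensionLE (n : ℕ) (N : Type u) [AddCommGroup N] [Module R N] :
    idLE R n N ↔ HasInjectiveDimensionLE (ModuleCat.of R N) n := by
  induction n generalizing N with
  | zero =>
    rw [HasInjectiveDimensionLE, zero_add, ← injective_iff_hasInjectiveDimensionLT_one,
      ← Module.injective_iff_injective_object]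
    rfl
  | succ n ih =>
    constructor
    · rintro ⟨I, _, _, f, hI, hf, hcoker⟩
      exact (hasInjectiveDimensionLE_succ_iff_of_injective hf n).mpr ((ih _).mp hcoker)
    · intro h
      let J : ModuleCat R := Injective.under (ModuleCat.of R N)
      let ι : ModuleCat.of R N ⟶ J := Injective.ι _
      have hJ : Module.Injective R J :=
        Module.injective_module_of_injective_object R J (inj := Injective.injective_under _)
      have hι : Function.Injective ι.hom := (ModuleCat.mono_iff_injective ι).mp inferInstance
      exact ⟨J, _, _, ι.hom, hJ, hι,
        (ih _).mpr ((hasInjectiveDimensionLE_succ_iff_of_injective hι n).mp h)⟩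

theorem pdim_le_coe_iff (M : Type u) [AddCommGroup M] [Module R M] (n : ℕ) :
    pdim R M ≤ n ↔ pdLE R n M := by
  refine ENat.sInf_image_coe_le_coe_iff (fun k l hkl hk => ?_) n
  rw [pdLE_iff_hasProjectiveDimensionLE] at hk ⊢
  exact hasProjectiveDimensionLT_of_ge _ (k + 1) (l + 1) (by omega)

theorem idim_le_coe_iff (N : Type u) [AddCommGroup N] [Module R N] (n : ℕ) :
    idim R N ≤ n ↔ idLE R n N := by
  refine ENat.sInf_image_coe_le_coe_iff (fun k l hkl hk => ?_) n
  rw [idLE_iff_hasInjectiveDimensionLE] at hk ⊢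
  exact hasInjectiveDimensionLT_of_ge _ (k + 1) (l + 1) (by omega)

end ModuleDimension

/-- The supremum of projective dimensions of all `R`-modules equals the supremum of
injective dimensions of all `R`-modules. -/
theorem sup_pdim_eq_sup_idim :
    (⨆ M : ModuleCat.{u} R, pdim R M) = ⨆ M : ModuleCat.{u} R, idim R M := by
  refine eq_of_forall_ge_iff fun c => ?_
  induction c using ENat.recTopCoe with
  | top => simp
  | coe n =>
    simp only [iSup_le_iff, pdim_le_coe_iff, idim_le_coe_iff, pdLE_iff_hasProjectiveDimensionLE,
      idLE_iff_hasInjectiveDimensionLE]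
    exact forall_hasProjectiveDimensionLT_iff_forall_hasInjectiveDimensionLT (n + 1)
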